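/- Let d ≥ 2 be an integer, let ζ, η be positive real numbers, and let ρ be a complex number with |ρ| = 1 satisfying ζ·(ρ^{d-1} - 1) + η·(d-1)·(ρ^{d-1} - ρ^{d-2}) = 0. Then ρ = 1. -/

import Mathlib

/-!
With `b = ρ ^ (d - 2)` and `c = η (d - 1) > 0` the equation says `(ζ + c) ρ ^ (d - 1) = ζ + c b`.
Taking norms gives `‖ζ + c b‖ = ζ + c`, equality in the triangle inequality, which in the strictly
convex plane forces `b = 1`; then `ρ = ρ b = ρ ^ (d - 1) = 1`.
-/

theorem eq_of_norm_smul_add_smul_eq {E : Type*} [NormedAddCommGroup E] [NormedSpace ℝ E]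
    [StrictConvexSpace ℝ E] {x y : E} {s t : ℝ} (hs : 0 < s) (ht : 0 < t) (hxy : ‖x‖ = ‖y‖)
    (h : ‖s • x + t • y‖ = s * ‖x‖ + t * ‖y‖) : x = y := by
  have hray : SameRay ℝ (s • x) (t • y) := by
    rw [sameRay_iff_norm_add, h, norm_smul, norm_smul, Real.norm_of_nonneg hs.le,
      Real.norm_of_nonneg ht.le]
  have hray' : SameRay ℝ x y := by
    simpa [smul_smul, hs.ne', ht.ne'] using
      (hray.pos_smul_left (inv_pos.2 hs)).pos_smul_right (inv_pos.2 ht)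
  exact hray'.eq_of_norm_eq hxy

theorem stmt_17 (d : ℕ) (hd : 2 ≤ d) (ζ η : ℝ) (hζ : 0 < ζ) (hη : 0 < η)
    (ρ : ℂ) (hρ : ‖ρ‖ = 1)
    (heq : (ζ : ℂ) * (ρ ^ (d - 1) - 1) + (η : ℂ) * (d - 1) * (ρ ^ (d - 1) - ρ ^ (d - 2)) = 0) :
    ρ = 1 := by
  set c : ℝ := η * (d - 1)
  have hc : 0 < c := mul_pos hη (by linarith [show (2 : ℝ) ≤ d by exact_mod_cast hd])
  set b := ρ ^ (d - 2)
  have hb_norm : ‖b‖ = 1 := by rw [norm_pow, hρ, one_pow]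
  have hpow : ρ ^ (d - 1) = ρ * b := by rw [← pow_succ', show d - 2 + 1 = d - 1 by omega]
  have hlin : (ζ + c) • ρ ^ (d - 1) = ζ • (1 : ℂ) + c • b := by
    simp only [Complex.real_smul, c]
    push_cast
    linear_combination heq
  have hb : b = 1 := by
    refine (eq_of_norm_smul_add_smul_eq hζ hc (by rw [hb_norm, norm_one]) ?_).symm
    rw [← hlin, norm_smul, norm_pow, hρ, one_pow, hb_norm, norm_one,
      Real.norm_of_nonneg (by positivity)]
    ring
  rw [hb, ← add_smul] at hlin
  rw [hb, mul_one] at hpow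
  rw [← hpow]
  exact smul_right_injective ℂ (by positivity : ζ + c ≠ 0) hlin
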